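/- arXiv:1308.3973 — 2 statements merged into one kernel-verified Lean document; each statement's English description precedes it below -/
import Mathlib

section
/- There exist torsion-free modules whose tensor product has nonzero torsion: over the polynomial ring R = ℂ[z,w], let I = (z², zw) and J = (w², zw) be ideals. Then the element z² ⊗ w² − zw ⊗ zw of I ⊗_R J is nonzero, but z · (z² ⊗ w² − zw ⊗ zw) = 0, so I ⊗_R J is not torsion-free. -/
/-!
Pair `I ⊗ J` against the residue field `ℂ[z, w] ⧸ (z, w)` by `a ⊗ b ↦ [z²]a · [w²]b`, where
`[z²]` and `[w²]` extract coefficients. No element of `I` or `J` has monomials of degree `< 2`,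
so these coefficients are linear modulo `(z, w)` and the pairing is well defined; it sends
`z² ⊗ w² - zw ⊗ zw` to `1`. On the other hand `z • (z² ⊗ w²) = z² ⊗ zw² = wz² ⊗ zw = z • (zw ⊗ zw)`.
-/

open TensorProduct MvPolynomial

namespace MvPolynomial

variable {σ R : Type*} [CommRing R]

variable (R) in
def vanishingBelow (s : σ →₀ ℕ) : Ideal (MvPolynomial σ R) where
  carrier := {p | ∀ t < s, coeff t p = 0}
  zero_mem' _ _ := coeff_zero _
  add_mem' hp hq t ht := by rw [coeff_add, hp t ht, hq t ht, add_zero]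
  smul_mem' r p hp t ht := by
    classical
    rw [smul_eq_mul, coeff_mul]
    refine Finset.sum_eq_zero fun u hu => ?_
    rw [Finset.HasAntidiagonal.mem_antidiagonal] at hu
    rw [hp u.2 ((le_add_self.trans_eq hu).trans_lt ht), mul_zero]

theorem monomial_mem_vanishingBelow {s u : σ →₀ ℕ} (h : ¬u < s) (c : R) :
    monomial u c ∈ vanishingBelow R s := fun t ht => by
  classical
  rw [coeff_monomial, if_neg (by rintro rfl; exact h ht)]

theorem coeff_mul_of_mem_vanishingBelow {s : σ →₀ ℕ} {p : MvPolynomial σ R}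
    (hp : p ∈ vanishingBelow R s) (r : MvPolynomial σ R) :
    coeff s (r * p) = constantCoeff r * coeff s p := by
  classical
  rw [coeff_mul, Finset.sum_eq_single (0, s)]
  · rfl
  · rintro ⟨a, b⟩ hab hne
    rw [Finset.HasAntidiagonal.mem_antidiagonal] at hab
    have hb : b < s := lt_of_le_of_ne (le_add_self.trans_eq hab) fun hbs => hne (by
      subst hbs; simpa using hab)
    rw [hp b hb, mul_zero]
  · simp

variable (σ R) in
abbrev residueAtOrigin : Type _ :=
  MvPolynomial σ R ⧸ RingHom.ker (constantCoeff : MvPolynomial σ R →+* R)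

noncomputable def residueCoeff (s : σ →₀ ℕ) :
    vanishingBelow R s →ₗ[MvPolynomial σ R] residueAtOrigin σ R where
  toFun p := Ideal.Quotient.mk _ (C (coeff s p))
  map_add' p q := by simp only [Submodule.coe_add, coeff_add, map_add]
  map_smul' r p := by
    rw [Submodule.coe_smul, smul_eq_mul, coeff_mul_of_mem_vanishingBelow p.2, C_mul, map_mul,
      RingHom.id_apply, Algebra.smul_def, Ideal.Quotient.algebraMap_eq]
    congr 1
    exact Ideal.Quotient.eq.mpr (by simp [RingHom.mem_ker])

theorem residueCoeff_apply (s : σ →₀ ℕ) (p : vanishingBelow R s) :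
    residueCoeff s p = Ideal.Quotient.mk _ (C (coeff s (p : MvPolynomial σ R))) :=
  rfl

theorem tmul_sub_tmul_ne_zero_of_coeff {I J : Ideal (MvPolynomial σ R)} {s t : σ →₀ ℕ}
    (hI : I ≤ vanishingBelow R s) (hJ : J ≤ vanishingBelow R t) (a c : I) (b d : J)
    (h : coeff s (a : MvPolynomial σ R) * coeff t (b : MvPolynomial σ R) ≠
      coeff s (c : MvPolynomial σ R) * coeff t (d : MvPolynomial σ R)) :
    a ⊗ₜ[MvPolynomial σ R] b - c ⊗ₜ d ≠ 0 := by
  intro h0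
  let pairing := (LinearMap.mul (MvPolynomial σ R) (residueAtOrigin σ R)).compl₁₂
    (residueCoeff s ∘ₗ Submodule.inclusion hI) (residueCoeff t ∘ₗ Submodule.inclusion hJ)
  have := congrArg (TensorProduct.lift pairing) h0
  rw [map_sub, map_zero, lift.tmul, lift.tmul] at this
  simp only [pairing, LinearMap.compl₁₂_apply, LinearMap.mul_apply', LinearMap.comp_apply,
    residueCoeff_apply, Submodule.coe_inclusion] at this
  apply h
  rw [← sub_eq_zero, ← constantCoeff_C σ (_ - _), ← RingHom.mem_ker,
    ← Ideal.Quotient.eq_zero_iff_mem]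
  simpa only [map_sub, map_mul] using this

theorem span_sq_mul_le_vanishingBelow {i j : σ} (hij : i ≠ j) :
    Ideal.span {X i ^ 2, X i * X j} ≤ vanishingBelow R (Finsupp.single i 2) := by
  classical
  rw [Ideal.span_le, Set.insert_subset_iff, Set.singleton_subset_iff, X_pow_eq_monomial, X, X,
    monomial_mul, one_mul]
  refine ⟨monomial_mem_vanishingBelow (lt_irrefl _) _, monomial_mem_vanishingBelow ?_ _⟩
  intro h
  simpa [hij.symm] using h.le j

theorem coeff_X_mul_X_of_ne {i j : σ} (hij : i ≠ j) :
    coeff (Finsupp.single i 2) (X i * X j : MvPolynomial σ R) = 0 := by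
  classical
  rw [X, X, monomial_mul, one_mul, coeff_monomial, if_neg]
  intro h
  simpa [hij.symm] using DFunLike.congr_fun h j

end MvPolynomial

theorem Ideal.smul_tmul_sub_tmul_eq_zero {A : Type*} [CommRing A] {x y : A} {I J : Ideal A}
    (hx2 : x ^ 2 ∈ I) (hxyI : x * y ∈ I) (hy2 : y ^ 2 ∈ J) (hxyJ : x * y ∈ J) :
    x • ((⟨x ^ 2, hx2⟩ : I) ⊗ₜ[A] (⟨y ^ 2, hy2⟩ : J) - (⟨x * y, hxyI⟩ : I) ⊗ₜ (⟨x * y, hxyJ⟩ : J))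
      = 0 := by
  have hJ : x • (⟨y ^ 2, hy2⟩ : J) = y • ⟨x * y, hxyJ⟩ :=
    Subtype.ext (by simp only [Submodule.coe_smul, smul_eq_mul]; ring)
  have hI : y • (⟨x ^ 2, hx2⟩ : I) = x • ⟨x * y, hxyI⟩ :=
    Subtype.ext (by simp only [Submodule.coe_smul, smul_eq_mul]; ring)
  rw [smul_sub, smul_tmul', smul_tmul', smul_tmul, hJ, ← smul_tmul, hI, sub_self]

theorem stmt_3 (z w : MvPolynomial (Fin 2) ℂ)
    (hz : z = MvPolynomial.X 0) (hw : w = MvPolynomial.X 1)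
    (I J : Ideal (MvPolynomial (Fin 2) ℂ))
    (hI : I = Ideal.span {z ^ 2, z * w}) (hJ : J = Ideal.span {w ^ 2, z * w})
    (hz2 : z ^ 2 ∈ I) (hzwI : z * w ∈ I) (hw2 : w ^ 2 ∈ J) (hzwJ : z * w ∈ J) :
    ((⟨z ^ 2, hz2⟩ : I) ⊗ₜ[MvPolynomial (Fin 2) ℂ] (⟨w ^ 2, hw2⟩ : J)
        - (⟨z * w, hzwI⟩ : I) ⊗ₜ (⟨z * w, hzwJ⟩ : J) ≠ 0 ∧
      z • ((⟨z ^ 2, hz2⟩ : I) ⊗ₜ[MvPolynomial (Fin 2) ℂ] (⟨w ^ 2, hw2⟩ : J)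
        - (⟨z * w, hzwI⟩ : I) ⊗ₜ (⟨z * w, hzwJ⟩ : J)) = 0) ∧
    Submodule.torsion (MvPolynomial (Fin 2) ℂ) (I ⊗[MvPolynomial (Fin 2) ℂ] J) ≠ ⊥ := by
  subst hz hw hI hJ
  have hI : Ideal.span {X 0 ^ 2, X 0 * X 1} ≤ vanishingBelow ℂ (Finsupp.single (0 : Fin 2) 2) :=
    span_sq_mul_le_vanishingBelow (by decide)
  have hJ : Ideal.span {X 1 ^ 2, X 0 * X 1} ≤ vanishingBelow ℂ (Finsupp.single (1 : Fin 2) 2) := by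
    rw [mul_comm]
    exact span_sq_mul_le_vanishingBelow (by decide)
  have hne := tmul_sub_tmul_ne_zero_of_coeff hI hJ ⟨_, hz2⟩ ⟨_, hzwI⟩ ⟨_, hw2⟩ ⟨_, hzwJ⟩
    (by simp [coeff_X_pow, coeff_X_mul_X_of_ne])
  have hzero := Ideal.smul_tmul_sub_tmul_eq_zero hz2 hzwI hw2 hzwJ
  refine ⟨⟨hne, hzero⟩, Submodule.ne_bot_iff _ |>.mpr ⟨_, ?_, hne⟩⟩
  exact (Submodule.mem_torsion_iff _).mpr
    ⟨⟨X 0, mem_nonZeroDivisors_of_ne_zero (X_ne_zero 0)⟩, hzero⟩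
end

section
/- Let R = ℂ[x,y,z₁,z₂,z₃] and J_S = (y²z₁ − xz₂, y²z₂ − xz₃). Then the element g = y(z₂² − z₁z₃) satisfies g² ∈ J_S but g ∉ J_S; hence J_S is not a radical ideal (the associated analytic set is not reduced). -/
open MvPolynomial

/- STATEMENT 15:
In R = ℂ[x,y,z₁,z₂,z₃], let J_S = (y²z₁ − xz₂, y²z₂ − xz₃).  Then
g = y(z₂² − z₁z₃) satisfies g² ∈ J_S but g ∉ J_S; hence J_S is not a radical
ideal. -/
theorem stmt_15 (x y z₁ z₂ z₃ : MvPolynomial (Fin 5) ℂ)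
    (hx : x = MvPolynomial.X 0) (hy : y = MvPolynomial.X 1)
    (hz₁ : z₁ = MvPolynomial.X 2) (hz₂ : z₂ = MvPolynomial.X 3)
    (hz₃ : z₃ = MvPolynomial.X 4)
    (JS : Ideal (MvPolynomial (Fin 5) ℂ))
    (hJS : JS = Ideal.span {y ^ 2 * z₁ - x * z₂, y ^ 2 * z₂ - x * z₃})
    (g : MvPolynomial (Fin 5) ℂ) (hg : g = y * (z₂ ^ 2 - z₁ * z₃)) :
    g ^ 2 ∈ JS ∧ g ∉ JS ∧ ¬ JS.IsRadical := by
  have hsq : g ^ 2 ∈ JS := by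
    rw [hJS, Ideal.mem_span_pair]
    exact ⟨-((z₂ ^ 2 - z₁ * z₃) * z₃), (z₂ ^ 2 - z₁ * z₃) * z₂, by rw [hg]; ring⟩
  have hnot : g ∉ JS := by
    intro hmem
    rw [hJS, Ideal.mem_span_pair] at hmem
    obtain ⟨a, b, hab⟩ := hmem
    -- substitute x ↦ y²
    set φ : MvPolynomial (Fin 5) ℂ →ₐ[ℂ] MvPolynomial (Fin 5) ℂ :=
      aeval (fun i => if i = 0 then (X 1 : MvPolynomial (Fin 5) ℂ) ^ 2 else X i) with hφ
    have h0 : φ x = (X 1 : MvPolynomial (Fin 5) ℂ) ^ 2 := by simp [hφ, hx]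
    have h1 : φ y = (X 1 : MvPolynomial (Fin 5) ℂ) := by simp [hφ, hy]
    have h2 : φ z₁ = (X 2 : MvPolynomial (Fin 5) ℂ) := by simp [hφ, hz₁]
    have h3 : φ z₂ = (X 3 : MvPolynomial (Fin 5) ℂ) := by simp [hφ, hz₂]
    have h4 : φ z₃ = (X 4 : MvPolynomial (Fin 5) ℂ) := by simp [hφ, hz₃]
    have key := congrArg φ hab
    simp only [map_add, map_mul, map_sub, map_pow, h0, h1, h2, h3, h4, hg] at key
    -- key : φ a * (X1²X2 − X1²X3) + φ b * (X1²X3 − X1²X4) = X1 * (X3² − X2X4)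
    have key2 : (X 1 : MvPolynomial (Fin 5) ℂ) *
        (X 1 * (φ a * (X 2 - X 3) + φ b * (X 3 - X 4))) =
        X 1 * (X 3 ^ 2 - X 2 * X 4) := by
      rw [← key]; ring
    have key3 := mul_left_cancel₀ (X_ne_zero (R := ℂ) (1 : Fin 5)) key2
    have := congrArg (eval (![0, 0, 0, 1, 0] : Fin 5 → ℂ)) key3
    simp at this
  refine ⟨hsq, hnot, fun hrad => hnot (hrad ⟨2, hsq⟩)⟩
end
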